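/- arXiv:1805.08816 — 2 statements merged into one kernel-verified Lean document; each statement's English description precedes it below -/
import Mathlib

section
/- Sampling correctness of copMEM: Let K ≤ L, and let k1, k2 be positive coprime integers with k1*k2 ≤ L - K + 1. For any starting positions i, j (of a common substring of length L' ≥ L in R and Q respectively), there exists an offset d with 0 ≤ d ≤ L' - K such that (i + d) ≡ 0 (mod k1) and (j + d) ≡ 0 (mod k2). -/
theorem stmt6 (K L L' k1 k2 i j : ℕ) (hKL : K ≤ L) (hLL' : L ≤ L')
    (h1 : 0 < k1) (h2 : 0 < k2) (hcop : Nat.gcd k1 k2 = 1)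
    (hprod : k1 * k2 ≤ L - K + 1) :
    ∃ d ≤ L' - K, k1 ∣ (i + d) ∧ k2 ∣ (j + d) := by
  set cr := Nat.chineseRemainder hcop (k1 - i % k1) (k2 - j % k2) with hcr
  obtain ⟨hd1, hd2⟩ := cr.2
  have hdlt : (cr : ℕ) < k1 * k2 :=
    Nat.chineseRemainder_lt_mul hcop _ _ h1.ne' h2.ne'
  refine ⟨cr, by omega, ?_, ?_⟩
  · have hdiv : k1 ∣ i + (k1 - i % k1) := by
      have := Nat.div_add_mod i k1
      have hi := Nat.mod_lt i h1
      have : i + (k1 - i % k1) = k1 * (i / k1 + 1) := by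
        rw [Nat.mul_add, Nat.mul_one]; omega
      exact ⟨i / k1 + 1, this⟩
    have : (i + (cr : ℕ)) ≡ 0 [MOD k1] :=
      (Nat.ModEq.add_left i hd1).trans ((Nat.modEq_zero_iff_dvd).mpr hdiv)
    exact (Nat.modEq_zero_iff_dvd).mp this
  · have hdiv : k2 ∣ j + (k2 - j % k2) := by
      have := Nat.div_add_mod j k2
      have hj := Nat.mod_lt j h2
      have : j + (k2 - j % k2) = k2 * (j / k2 + 1) := by
        rw [Nat.mul_add, Nat.mul_one]; omega
      exact ⟨j / k2 + 1, this⟩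
    have : (j + (cr : ℕ)) ≡ 0 [MOD k2] :=
      (Nat.ModEq.add_left j hd2).trans ((Nat.modEq_zero_iff_dvd).mpr hdiv)
    exact (Nat.modEq_zero_iff_dvd).mp this
end

section
/- MEM detection guarantee: Let R, Q be strings over an alphabet, and suppose R[i..i+L'-1] = Q[j..j+L'-1] with L' ≥ L ≥ K ≥ 1. Let k1, k2 be positive coprime integers with k1*k2 ≤ L - K + 1. Then there exist positions i' and j' with k1 ∣ i', k2 ∣ j', i ≤ i' ≤ i + L' - K, j ≤ j' ≤ j + L' - K, i' - i = j' - j, and R[i'..i'+K-1] = Q[j'..j'+K-1]. -/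
theorem stmt7 {α : Type*} (R Q : List α) (i j K L L' k1 k2 : ℕ)
    (hK : 1 ≤ K) (hKL : K ≤ L) (hLL' : L ≤ L')
    (hiR : i + L' ≤ R.length) (hjQ : j + L' ≤ Q.length)
    (hmatch : (R.drop i).take L' = (Q.drop j).take L')
    (h1 : 0 < k1) (h2 : 0 < k2) (hcop : Nat.gcd k1 k2 = 1)
    (hprod : k1 * k2 ≤ L - K + 1) :
    ∃ i' j', k1 ∣ i' ∧ k2 ∣ j' ∧
      i ≤ i' ∧ i' ≤ i + L' - K ∧ j ≤ j' ∧ j' ≤ j + L' - K ∧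
      i' - i = j' - j ∧ (R.drop i').take K = (Q.drop j').take K := by
  have hcop' : Nat.Coprime k1 k2 := hcop
  obtain ⟨c, hc1, hc2⟩ := Nat.chineseRemainder hcop' (i * (k1 - 1)) (j * (k2 - 1))
  set d := c % (k1 * k2) with hd
  have hpos : 0 < k1 * k2 := Nat.mul_pos h1 h2
  have hdlt : d < k1 * k2 := Nat.mod_lt _ hpos
  have hdc : d ≡ c [MOD k1 * k2] := (Nat.mod_modEq c (k1 * k2))
  have hd1 : d ≡ i * (k1 - 1) [MOD k1] :=
    ((hdc.of_dvd ⟨k2, rfl⟩)).trans (hc1.of_dvd dvd_rfl)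
  have hd2 : d ≡ j * (k2 - 1) [MOD k2] :=
    ((hdc.of_dvd ⟨k1, Nat.mul_comm _ _⟩)).trans (hc2.of_dvd dvd_rfl)
  have hdvd1 : k1 ∣ i + d := by
    have : i + d ≡ i + i * (k1 - 1) [MOD k1] := Nat.ModEq.add_left i hd1
    have heq : i + i * (k1 - 1) = i * k1 := by
      have : k1 - 1 + 1 = k1 := Nat.succ_pred_eq_of_pos h1
      nlinarith [Nat.sub_add_cancel h1]
    rw [heq] at this
    have : i + d ≡ 0 [MOD k1] := this.trans (Nat.modEq_zero_iff_dvd.mpr ⟨i, Nat.mul_comm _ _⟩)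
    exact (Nat.modEq_zero_iff_dvd).mp this
  have hdvd2 : k2 ∣ j + d := by
    have : j + d ≡ j + j * (k2 - 1) [MOD k2] := Nat.ModEq.add_left j hd2
    have heq : j + j * (k2 - 1) = j * k2 := by
      nlinarith [Nat.sub_add_cancel h2]
    rw [heq] at this
    have : j + d ≡ 0 [MOD k2] := this.trans (Nat.modEq_zero_iff_dvd.mpr ⟨j, Nat.mul_comm _ _⟩)
    exact (Nat.modEq_zero_iff_dvd).mp this
  have hdLK : d ≤ L - K := by omega
  have hdK : d + K ≤ L' := by omega
  refine ⟨i + d, j + d, hdvd1, hdvd2, by omega, by omega, by omega, by omega,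
    by omega, ?_⟩
  have key : ∀ (X : List α) (a : ℕ), (X.drop (a + d)).take K = (((X.drop a).take L').drop d).take K := by
    intro X a
    rw [List.drop_take, List.drop_drop]
    rw [List.take_take, Nat.min_eq_left (by omega)]
  rw [key R i, key Q j, hmatch]
end
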